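/- arXiv:1711.11129 — 4 statements merged into one kernel-verified Lean document; each statement's English description precedes it below -/
import Mathlib

section
/- For a single hour, suppose c is C^2 with c' > 0 on the relevant domain, and at the point (ℓ_1,…,ℓ_N) with ℓ = ∑_n ℓ_n > 0 the condition (ℓ)^2 / (∑_n ℓ_n^2) > ( ℓ c''(ℓ) / (2 c'(ℓ)) )^2 holds. Then the N×N matrix M with entries M_{nn} = 2c'(ℓ) + ℓ_n c''(ℓ) and M_{nm} = c'(ℓ) + (1/2)(ℓ_n + ℓ_m) c''(ℓ) for n ≠ m (the symmetrized Jacobian of the pseudo-gradient map g_n(ℓ_1,…,ℓ_N) = c(ℓ) + ℓ_n c'(ℓ)) is positive definite. -/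
/-!
Writing `a = c'(ℓ)`, `b = c''(ℓ)` and `S = ∑ xₙ`, the quadratic form of `M` is
`xᵀ M x = a (‖x‖² + S²) + b ⟪ℓ, x⟫ S`. By Cauchy–Schwarz and AM–GM,
`|b ⟪ℓ, x⟫ S| ≤ |b| ‖ℓ‖ ‖x‖ |S|` and `2 a ‖x‖ |S| ≤ a (‖x‖² + S²)`, and the hypothesis on `c`
amounts to `b² ‖ℓ‖² < 4 a²`, so the cross term never cancels the positive part.
-/

open Finset Matrix

lemma sq_dotProduct_le {N : Type*} [Fintype N] (u v : N → ℝ) :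
    (u ⬝ᵥ v) ^ 2 ≤ (u ⬝ᵥ u) * (v ⬝ᵥ v) := by
  simpa only [dotProduct, sq] using sum_mul_sq_le_sq_mul_sq univ u v

lemma add_pos_of_sq_le_mul {a q s w k : ℝ} (ha : 0 < a) (hq : 0 < q) (hk : k < 4 * a ^ 2)
    (hw : w ^ 2 ≤ k * q * s ^ 2) : 0 < a * q + a * s ^ 2 + w := by
  rcases eq_or_ne s 0 with rfl | hs
  · have hw0 : w = 0 := by nlinarith [sq_nonneg w]
    simp [hw0, ha, hq]
  · have hqs : 0 < q * s ^ 2 := by positivity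
    have hsq : w ^ 2 < (a * q + a * s ^ 2) ^ 2 := calc
      w ^ 2 ≤ k * q * s ^ 2 := hw
      _ < 4 * a ^ 2 * q * s ^ 2 := by nlinarith
      _ ≤ (a * q + a * s ^ 2) ^ 2 := by nlinarith [sq_nonneg (a * q - a * s ^ 2)]
    linarith [neg_abs_le w, abs_lt_of_sq_lt_sq hsq (by positivity)]

lemma sq_mul_lt_of_sq_div_lt {L a b T : ℝ} (ha : a ≠ 0)
    (h : (L * b / (2 * a)) ^ 2 < L ^ 2 / T) : b ^ 2 * T < 4 * a ^ 2 := by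
  obtain ⟨hL, hT⟩ : 0 < L ^ 2 ∧ 0 < T := by
    have hpos : 0 < L ^ 2 / T := (sq_nonneg _).trans_lt h
    rcases div_pos_iff.1 hpos with hpos | ⟨hneg, -⟩
    · exact hpos
    · exact absurd hneg (sq_nonneg L).not_gt
  rw [div_pow, lt_div_iff₀ hT, div_mul_eq_mul_div, div_lt_iff₀ (by positivity)] at h
  nlinarith

section SymmPseudoGradJacobian

variable {N : Type*} [DecidableEq N]

/-- `a` and `b` stand for `c'(ℓ)` and `c''(ℓ)`. -/
noncomputable def symmPseudoGradJacobian (a b : ℝ) (ℓ : N → ℝ) : Matrix N N ℝ :=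
  a • (1 + vecMulVec 1 1) + (b / 2) • (vecMulVec ℓ 1 + vecMulVec 1 ℓ)

lemma symmPseudoGradJacobian_apply (a b : ℝ) (ℓ : N → ℝ) (n m : N) :
    symmPseudoGradJacobian a b ℓ n m =
      if n = m then 2 * a + ℓ n * b else a + (ℓ n + ℓ m) / 2 * b := by
  simp only [symmPseudoGradJacobian, Matrix.add_apply, Matrix.smul_apply, one_apply, vecMulVec_apply,
    Pi.one_apply, smul_eq_mul]
  split_ifs with h
  · subst h
    ring
  · ring

lemma isHermitian_symmPseudoGradJacobian (a b : ℝ) (ℓ : N → ℝ) :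
    (symmPseudoGradJacobian a b ℓ).IsHermitian := by
  simp only [IsHermitian, symmPseudoGradJacobian, conjTranspose_eq_transpose_of_trivial,
    transpose_add, transpose_smul, transpose_one, transpose_vecMulVec, add_comm (vecMulVec 1 ℓ)]

lemma dotProduct_symmPseudoGradJacobian_mulVec [Fintype N] (a b : ℝ) (ℓ x : N → ℝ) :
    x ⬝ᵥ symmPseudoGradJacobian a b ℓ *ᵥ x =
      a * (x ⬝ᵥ x) + a * (1 ⬝ᵥ x) ^ 2 + b * (ℓ ⬝ᵥ x) * (1 ⬝ᵥ x) := by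
  simp only [symmPseudoGradJacobian, add_mulVec, smul_mulVec, one_mulVec, vecMulVec_mulVec,
    op_smul_eq_smul, dotProduct_add, dotProduct_smul, smul_eq_mul]
  rw [dotProduct_comm x 1, dotProduct_comm x ℓ]
  ring

theorem posDef_symmPseudoGradJacobian [Fintype N] {a b : ℝ} {ℓ : N → ℝ} (ha : 0 < a)
    (h : b ^ 2 * (ℓ ⬝ᵥ ℓ) < 4 * a ^ 2) : (symmPseudoGradJacobian a b ℓ).PosDef := by
  refine posDef_iff_dotProduct_mulVec.2
    ⟨isHermitian_symmPseudoGradJacobian a b ℓ, fun x hx => ?_⟩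
  rw [star_trivial, dotProduct_symmPseudoGradJacobian_mulVec, mul_assoc b]
  refine add_pos_of_sq_le_mul ha (by simpa using dotProduct_star_self_pos_iff.2 hx) h ?_
  calc (b * ((ℓ ⬝ᵥ x) * (1 ⬝ᵥ x))) ^ 2 = b ^ 2 * (ℓ ⬝ᵥ x) ^ 2 * (1 ⬝ᵥ x) ^ 2 := by ring
    _ ≤ b ^ 2 * ((ℓ ⬝ᵥ ℓ) * (x ⬝ᵥ x)) * (1 ⬝ᵥ x) ^ 2 := by gcongr; exact sq_dotProduct_le ℓ x
    _ = b ^ 2 * (ℓ ⬝ᵥ ℓ) * (x ⬝ᵥ x) * (1 ⬝ᵥ x) ^ 2 := by ring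

end SymmPseudoGradJacobian

theorem hp_symmetrized_jacobian_posdef_general
    {N : Type*} [Fintype N] [DecidableEq N]
    (c : ℝ → ℝ) (ℓ : N → ℝ)
    (L : ℝ)
    (hc' : 0 < deriv c L)
    (hcond : (L * deriv (deriv c) L / (2 * deriv c L)) ^ 2
        < L ^ 2 / ∑ n, (ℓ n) ^ 2)
    (M : Matrix N N ℝ)
    (hM : ∀ n m, M n m = if n = m then 2 * deriv c L + ℓ n * deriv (deriv c) L
      else deriv c L + (ℓ n + ℓ m) / 2 * deriv (deriv c) L) :
    M.PosDef := by
  have hM_eq : M = symmPseudoGradJacobian (deriv c L) (deriv (deriv c) L) ℓ := by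
    ext n m
    rw [hM, symmPseudoGradJacobian_apply]
  have hsq : ∑ n, ℓ n ^ 2 = ℓ ⬝ᵥ ℓ := by simp only [dotProduct, sq]
  rw [hsq] at hcond
  exact hM_eq ▸ posDef_symmPseudoGradJacobian hc'
    (sq_mul_lt_of_sq_div_lt hc'.ne' hcond)

/-- Under the Rosen-type condition
`ℓ² / ∑ ℓₙ² > (ℓ c''(ℓ) / (2 c'(ℓ)))²` with `c' (ℓ) > 0`, the symmetrized Jacobian
of the pseudo-gradient map of the single-hour hourly proportional game is positive
definite. -/
theorem hp_symmetrized_jacobian_posdef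
    {N : Type*} [Fintype N] [DecidableEq N]
    (c : ℝ → ℝ) (ℓ : N → ℝ) (hℓ : ∀ n, 0 ≤ ℓ n)
    (L : ℝ) (hL : L = ∑ n, ℓ n) (hLpos : 0 < L)
    (hc2 : ContDiffAt ℝ 2 c L)
    (hc' : 0 < deriv c L)
    (hcond : (L * deriv (deriv c) L / (2 * deriv c L)) ^ 2
        < L ^ 2 / ∑ n, (ℓ n) ^ 2)
    (M : Matrix N N ℝ)
    (hM : ∀ n m, M n m = if n = m then 2 * deriv c L + ℓ n * deriv (deriv c) L
      else deriv c L + (ℓ n + ℓ m) / 2 * deriv (deriv c) L) :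
    M.PosDef :=
  hp_symmetrized_jacobian_posdef_general c ℓ L hc' hcond M hM
end

section
/- If a cost-minimization game G is locally (λ, μ)-smooth with 0 ≤ μ < 1 with respect to a socially optimal outcome y, then every Nash equilibrium x* of G satisfies SC(x*) ≤ (λ/(1−μ)) SC(y); in particular the price of anarchy of G is at most λ/(1−μ). -/
open Finset

/-- If a cost-minimization game is locally (λ, μ)-smooth with 0 ≤ μ < 1
with respect to an outcome y, then every Nash equilibrium x satisfies
SC x ≤ (λ/(1−μ)) · SC y; in particular (taking y socially optimal) the price of
anarchy is at most λ/(1−μ). -/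
theorem local_smoothness_poa_bound
    {N H : Type*} [Fintype N] [Fintype H] [DecidableEq N]
    (X : N → Set (H → ℝ)) (hXconv : ∀ n, Convex ℝ (X n))
    (b : N → (N → H → ℝ) → ℝ)
    (SC : (N → H → ℝ) → ℝ) (hSC : ∀ x, SC x = ∑ n, b n x)
    (G : N → (N → H → ℝ) → (H → ℝ))
    (hG : ∀ (n : N) (x : N → H → ℝ) (y : H → ℝ),
      HasDerivAt (fun t : ℝ => b n (Function.update x n (x n + t • (y - x n))))
        (∑ h, G n x h * (y h - x n h)) 0)
    (lam mu : ℝ) (hmu0 : 0 ≤ mu) (hmu1 : mu < 1)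
    (y : N → H → ℝ) (hy : ∀ n, y n ∈ X n)
    (hsmooth : ∀ x : N → H → ℝ, (∀ n, x n ∈ X n) →
      ∑ n, (b n x + ∑ h, G n x h * (y n h - x n h)) ≤ lam * SC y + mu * SC x)
    (x : N → H → ℝ) (hxX : ∀ n, x n ∈ X n)
    (hxNE : ∀ n, ∀ z ∈ X n, b n x ≤ b n (Function.update x n z)) :
    SC x ≤ (lam / (1 - mu)) * SC y := by
  have hd : ∀ n, 0 ≤ ∑ h, G n x h * (y n h - x n h) := by
    intro n
    set f : ℝ → ℝ := fun t => b n (Function.update x n (x n + t • (y n - x n))) with hf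
    have hder := hG n x (y n)
    have h0 : f 0 = b n x := by
      simp [f, Function.update_eq_self]
    have hge : ∀ t ∈ Set.Ioc (0:ℝ) 1, f 0 ≤ f t := by
      intro t ht
      have hmem : x n + t • (y n - x n) ∈ X n := by
        have hc := hXconv n (hxX n) (hy n)
          (by linarith [ht.2] : (0:ℝ) ≤ 1 - t) (le_of_lt ht.1) (by ring)
        convert hc using 1
        funext h
        simp only [Pi.add_apply, Pi.smul_apply, Pi.sub_apply, smul_eq_mul]
        ring
      rw [h0]
      exact hxNE n _ hmem
    have hslope := hasDerivAt_iff_tendsto_slope.mp hder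
    have hsub : nhdsWithin (0:ℝ) (Set.Ioi 0) ≤ nhdsWithin 0 {(0:ℝ)}ᶜ :=
      nhdsWithin_mono _ fun t ht => ne_of_gt ht
    have htend : Filter.Tendsto (slope f 0) (nhdsWithin 0 (Set.Ioi 0))
        (nhds (∑ h, G n x h * (y n h - x n h))) := hslope.mono_left hsub
    refine ge_of_tendsto htend ?_
    filter_upwards [Ioc_mem_nhdsGT_of_mem (Set.left_mem_Ico.mpr one_pos)] with t ht
    have hft := hge t ht
    rw [slope_def_field]
    have : 0 < t - 0 := by linarith [ht.1]
    exact div_nonneg (by linarith) (by linarith)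
  have hs := hsmooth x hxX
  rw [Finset.sum_add_distrib] at hs
  have hsum : 0 ≤ ∑ n, ∑ h, G n x h * (y n h - x n h) :=
    Finset.sum_nonneg fun n _ => hd n
  rw [← hSC x] at hs
  have hkey : (1 - mu) * SC x ≤ lam * SC y := by linarith
  rw [div_mul_eq_mul_div, le_div_iff₀ (by linarith : (0:ℝ) < 1 - mu)]
  linarith [hkey]
end

section
/- For the hourly proportional billing game with quadratic costs C_h(ℓ) = a_2^h ℓ^2 + a_1^h ℓ (a_2^h > 0, a_1^h ≥ 0) and aggregate loads bounded by L̄^h, the price of anarchy satisfies PoA ≤ 1 + (3/4) · sup_h [ 1 / (1 + a_1^h/(a_2^h L̄^h)) ]. In particular PoA ≤ 7/4 always, and PoA → 1 as the ratio a_1^h/(a_2^h L̄^h) → ∞ uniformly in h. -/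
/-!
At a Nash equilibrium `x` each player's bill is minimal over its convex strategy set, and the
bill is a convex quadratic in the player's own strategy, so the first-order condition holds:
the marginal bill of moving towards any feasible `y` is nonnegative. Summing these conditions
over players bounds, hour by hour with loads `ℓ = ∑ x` and `m = ∑ y`, the equilibrium cost by
`a₂ ℓ m + a₁ m + a₂ m² / 4`. Completing the square gives `a₂ (ℓ m - 3 m² / 4) ≤ a₂ ℓ² / 3`, and
the capacity `ℓ ≤ L̄` gives `a₂ ℓ² ≤ α (a₂ ℓ² + a₁ ℓ)` with `α = 1 / (1 + a₁ / (a₂ L̄))`. Hence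
`SC x ≤ (s / 3) SC x + SC y` with `s = sup α ≤ 1`, and `1 / (1 - s / 3) ≤ 1 + 3 s / 4`.
-/

open Finset Filter Topology

open Function (update)

def IsNashEquilibrium {N : Type*} {S : N → Type*} [DecidableEq N] (X : ∀ n, Set (S n))
    (cost : N → (∀ n, S n) → ℝ) (x : ∀ n, S n) : Prop :=
  (∀ n, x n ∈ X n) ∧ ∀ n, ∀ y ∈ X n, cost n x ≤ cost n (update x n y)

theorem IsMinOn.nonneg_of_eq_quadratic {E : Type*} [AddCommGroup E] [Module ℝ E]
    {S : Set E} {f : E → ℝ} {x y : E} (hmin : IsMinOn f S x) (hS : Convex ℝ S)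
    (hx : x ∈ S) (hy : y ∈ S) {A B : ℝ}
    (hf : ∀ θ : ℝ, f (x + θ • (y - x)) = f x + θ * A + θ ^ 2 * B) : 0 ≤ A := by
  have hslope : ∀ θ ∈ Set.Ioc (0 : ℝ) 1, 0 ≤ A + θ * B := fun θ ⟨hθ0, hθ1⟩ => by
    have := isMinOn_iff.mp hmin _ (hS.add_smul_sub_mem hx hy ⟨hθ0.le, hθ1⟩)
    rw [hf] at this
    nlinarith
  have hlim : Tendsto (fun θ : ℝ => A + θ * B) (𝓝[>] 0) (𝓝 A) :=
    tendsto_nhdsWithin_of_tendsto_nhds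
      ((by fun_prop : Continuous fun θ : ℝ => A + θ * B).tendsto' 0 A (by simp))
  exact ge_of_tendsto hlim (eventually_of_mem (Ioc_mem_nhdsGT zero_lt_one) hslope)

theorem sum_update_apply {N H G : Type*} [Fintype N] [DecidableEq N] [AddCommGroup G]
    (x : N → H → G) (n : N) (z : H → G) (h : H) :
    ∑ m, update x n z m h = ∑ m, x m h - x n h + z h := by
  simp only [Function.apply_update (fun (_ : N) (f : H → G) => f h),
    sum_update_of_mem (mem_univ n), sum_sdiff_eq_sub (subset_univ _), sum_singleton]
  abel

theorem sum_marginal_le {ι : Type*} (s : Finset ι) {a2 a1 : ℝ} (ha2 : 0 ≤ a2) (u v : ι → ℝ)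
    (hv : ∀ i ∈ s, 0 ≤ v i) :
    ∑ i ∈ s, (v i - u i) * (a2 * ∑ j ∈ s, u j + a1 + a2 * u i) ≤
      a2 * (∑ i ∈ s, u i) * (∑ i ∈ s, v i) + a1 * ∑ i ∈ s, v i + a2 * (∑ i ∈ s, v i) ^ 2 / 4
        - (a2 * (∑ i ∈ s, u i) ^ 2 + a1 * ∑ i ∈ s, u i) := by
  set U := ∑ i ∈ s, u i
  set V := ∑ i ∈ s, v i
  calc ∑ i ∈ s, (v i - u i) * (a2 * U + a1 + a2 * u i)
      ≤ ∑ i ∈ s, ((v i - u i) * (a2 * U + a1) + a2 / 4 * v i ^ 2) :=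
        sum_le_sum fun i _ => by nlinarith [mul_nonneg ha2 (sq_nonneg (v i - 2 * u i))]
    _ = (V - U) * (a2 * U + a1) + a2 / 4 * ∑ i ∈ s, v i ^ 2 := by
        rw [sum_add_distrib, ← sum_mul, sum_sub_distrib, ← mul_sum]
    _ ≤ (V - U) * (a2 * U + a1) + a2 / 4 * V ^ 2 := by
        gcongr
        exact sum_sq_le_sq_sum_of_nonneg hv
    _ = _ := by ring

section Hourly

variable {a2 a1 L ℓ : ℝ}

theorem quadratic_le_mul_cost (ha2 : 0 ≤ a2) (ha1 : 0 ≤ a1) (hℓ : 0 ≤ ℓ) (hℓL : ℓ ≤ L) :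
    a2 * ℓ ^ 2 ≤ 1 / (1 + a1 / (a2 * L)) * (a2 * ℓ ^ 2 + a1 * ℓ) := by
  have hL : 0 ≤ a2 * L := mul_nonneg ha2 (hℓ.trans hℓL)
  have hq : 0 ≤ a1 / (a2 * L) := div_nonneg ha1 hL
  have hcap : a2 * ℓ ^ 2 * (a1 / (a2 * L)) ≤ a1 * ℓ := by
    rw [← mul_div_assoc]
    refine div_le_of_le_mul₀ hL (mul_nonneg ha1 hℓ) ?_
    nlinarith [mul_nonneg (mul_nonneg ha1 ha2) (mul_nonneg hℓ (sub_nonneg.2 hℓL))]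
  rw [one_div_mul_eq_div, le_div_iff₀ (by positivity)]
  linarith

theorem hourly_smoothness {m s : ℝ} (ha2 : 0 ≤ a2) (ha1 : 0 ≤ a1) (hℓ : 0 ≤ ℓ) (hℓL : ℓ ≤ L)
    (hs : 1 / (1 + a1 / (a2 * L)) ≤ s) :
    a2 * ℓ * m + a1 * m + a2 * m ^ 2 / 4 ≤
      s / 3 * (a2 * ℓ ^ 2 + a1 * ℓ) + (a2 * m ^ 2 + a1 * m) := by
  have hsquare : a2 * ℓ * m - 3 / 4 * (a2 * m ^ 2) ≤ a2 * ℓ ^ 2 / 3 := by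
    nlinarith [mul_nonneg ha2 (sq_nonneg (3 * m - 2 * ℓ))]
  have hcost : 0 ≤ a2 * ℓ ^ 2 + a1 * ℓ := by positivity
  have := quadratic_le_mul_cost ha2 ha1 hℓ hℓL
  nlinarith [mul_le_mul_of_nonneg_right hs hcost]

end Hourly

section Billing

variable {N H : Type*} [Fintype N] [Fintype H] {a2 a1 : H → ℝ}

def proportionalBill (a2 a1 : H → ℝ) (n : N) (x : N → H → ℝ) : ℝ :=
  ∑ h, x n h * (a2 h * (∑ m, x m h) + a1 h)

def socialCost (a2 a1 : H → ℝ) (x : N → H → ℝ) : ℝ :=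
  ∑ h, (a2 h * (∑ n, x n h) ^ 2 + a1 h * (∑ n, x n h))

theorem socialCost_nonneg (ha2 : ∀ h, 0 ≤ a2 h) (ha1 : ∀ h, 0 ≤ a1 h) {x : N → H → ℝ}
    (hx : ∀ n h, 0 ≤ x n h) : 0 ≤ socialCost a2 a1 x :=
  sum_nonneg fun h _ =>
    have := sum_nonneg fun n (_ : n ∈ univ) => hx n h
    add_nonneg (mul_nonneg (ha2 h) (sq_nonneg _)) (mul_nonneg (ha1 h) this)

variable [DecidableEq N]

theorem proportionalBill_update_add_smul (x : N → H → ℝ) (n : N) (d : H → ℝ) (θ : ℝ) :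
    proportionalBill a2 a1 n (update x n (x n + θ • d)) =
      proportionalBill a2 a1 n x + θ * ∑ h, d h * (a2 h * ∑ m, x m h + a1 h + a2 h * x n h)
        + θ ^ 2 * ∑ h, a2 h * d h ^ 2 := by
  simp only [proportionalBill, sum_update_apply, Function.update_self, Pi.add_apply,
    Pi.smul_apply, smul_eq_mul]
  rw [mul_sum, mul_sum, ← sum_add_distrib, ← sum_add_distrib]
  exact sum_congr rfl fun h _ => by ring

variable {X : N → Set (H → ℝ)} {x : N → H → ℝ}

theorem IsNashEquilibrium.marginal_nonneg (hX : ∀ n, Convex ℝ (X n))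
    (hx : IsNashEquilibrium X (proportionalBill a2 a1) x) (n : N) {y : H → ℝ} (hy : y ∈ X n) :
    0 ≤ ∑ h, (y h - x n h) * (a2 h * ∑ m, x m h + a1 h + a2 h * x n h) := by
  refine IsMinOn.nonneg_of_eq_quadratic (f := fun z => proportionalBill a2 a1 n (update x n z))
    (B := ∑ h, a2 h * (y h - x n h) ^ 2)
    (isMinOn_iff.mpr fun z hz => ?_) (hX n) (hx.1 n) hy fun θ => ?_
  · simpa only [Function.update_eq_self] using hx.2 n z hz
  · simp only [proportionalBill_update_add_smul, Function.update_eq_self, Pi.sub_apply]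

theorem IsNashEquilibrium.socialCost_le (ha2 : ∀ h, 0 ≤ a2 h) (ha1 : ∀ h, 0 ≤ a1 h)
    (hX : ∀ n, Convex ℝ (X n)) (hXpos : ∀ n, ∀ z ∈ X n, ∀ h, 0 ≤ z h) {L : H → ℝ} {s : ℝ}
    (hs : ∀ h, 1 / (1 + a1 h / (a2 h * L h)) ≤ s)
    (hx : IsNashEquilibrium X (proportionalBill a2 a1) x) (hxL : ∀ h, ∑ n, x n h ≤ L h)
    {y : N → H → ℝ} (hy : ∀ n, y n ∈ X n) :
    socialCost a2 a1 x ≤ s / 3 * socialCost a2 a1 x + socialCost a2 a1 y := by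
  have hmarginal : 0 ≤ ∑ h, ∑ n, (y n h - x n h) * (a2 h * ∑ m, x m h + a1 h + a2 h * x n h) := by
    rw [sum_comm]
    exact sum_nonneg fun n _ => hx.marginal_nonneg hX n (hy n)
  have hhour : ∀ h, ∑ n, (y n h - x n h) * (a2 h * ∑ m, x m h + a1 h + a2 h * x n h) ≤
      s / 3 * (a2 h * (∑ n, x n h) ^ 2 + a1 h * ∑ n, x n h)
        + (a2 h * (∑ n, y n h) ^ 2 + a1 h * ∑ n, y n h)
        - (a2 h * (∑ n, x n h) ^ 2 + a1 h * ∑ n, x n h) := fun h => by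
    have hxh := sum_nonneg fun n (_ : n ∈ univ) => hXpos n _ (hx.1 n) h
    have := hourly_smoothness (m := ∑ n, y n h) (ha2 h) (ha1 h) hxh (hxL h) (hs h)
    linarith [sum_marginal_le univ (ha2 h) (a1 := a1 h) (fun n => x n h) (fun n => y n h)
      fun n _ => hXpos n _ (hy n) h]
  have := hmarginal.trans (sum_le_sum fun h _ => hhour h)
  simp only [socialCost, sum_sub_distrib, sum_add_distrib, ← mul_sum] at this ⊢
  linarith

end Billing

theorem le_one_add_mul_of_le_third_mul_add {s p q : ℝ} (hs0 : 0 ≤ s) (hs1 : s ≤ 1) (hp : 0 ≤ p)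
    (h : p ≤ s / 3 * p + q) : p ≤ (1 + 3 / 4 * s) * q := by
  nlinarith [mul_le_mul_of_nonneg_left h (by linarith : (0 : ℝ) ≤ 1 + 3 / 4 * s),
    mul_nonneg (mul_nonneg hs0 (by linarith : (0 : ℝ) ≤ 5 - 3 * s)) hp]

theorem hp_quadratic_poa_bound_general
    {N H : Type*} [Fintype N] [Fintype H] [DecidableEq N] [Nonempty H]
    (a1 a2 Lbar : H → ℝ) (ha2 : ∀ h, 0 < a2 h) (ha1 : ∀ h, 0 ≤ a1 h)
    (hLbar : ∀ h, 0 < Lbar h)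
    (X : N → Set (H → ℝ))
    (hXconv : ∀ n, Convex ℝ (X n))
    (hXpos : ∀ n, ∀ z ∈ X n, ∀ h, 0 ≤ z h)
    (hbound : ∀ x : N → H → ℝ, (∀ n, x n ∈ X n) → ∀ h, (∑ n, x n h) ≤ Lbar h)
    (b : N → (N → H → ℝ) → ℝ)
    (hb : ∀ n x, b n x = ∑ h, x n h * (a2 h * (∑ m, x m h) + a1 h))
    (SC : (N → H → ℝ) → ℝ)
    (hSC : ∀ x, SC x = ∑ h, (a2 h * (∑ n, x n h) ^ 2 + a1 h * (∑ n, x n h)))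
    (NE : (N → H → ℝ) → Prop)
    (hNE : ∀ x, NE x ↔ (∀ n, x n ∈ X n) ∧
      ∀ n, ∀ y ∈ X n, b n x ≤ b n (Function.update x n y))
    (K : ℝ)
    (hK : K = 1 + 3 / 4 * Finset.univ.sup' Finset.univ_nonempty
      (fun h => 1 / (1 + a1 h / (a2 h * Lbar h)))) :
    (∀ x, NE x → ∀ y : N → H → ℝ, (∀ n, y n ∈ X n) → SC x ≤ K * SC y) ∧
    K ≤ 7 / 4 ∧
    (∀ ε > (0 : ℝ), ∃ R : ℝ, ∀ ρ : ℝ, R ≤ ρ → 1 + 3 / 4 * (1 / (1 + ρ)) ≤ 1 + ε) := by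
  obtain rfl : b = proportionalBill a2 a1 := funext₂ hb
  obtain rfl : SC = socialCost a2 a1 := funext hSC
  obtain rfl : NE = IsNashEquilibrium X (proportionalBill a2 a1) := funext fun x => propext (hNE x)
  set α := fun h => 1 / (1 + a1 h / (a2 h * Lbar h))
  have hα : ∀ h, 0 < α h ∧ α h ≤ 1 := fun h => by
    have : 0 ≤ a1 h / (a2 h * Lbar h) := div_nonneg (ha1 h) (mul_pos (ha2 h) (hLbar h)).le
    exact ⟨by positivity, div_le_one_of_le₀ (by linarith) (by linarith)⟩
  have hs0 : 0 ≤ univ.sup' univ_nonempty α :=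
    (hα (Classical.arbitrary H)).1.le.trans (le_sup' α (mem_univ _))
  have hs1 : univ.sup' univ_nonempty α ≤ 1 := sup'_le _ _ fun h _ => (hα h).2
  subst hK
  refine ⟨fun x hx y hy => ?_, by linarith, fun ε hε => ?_⟩
  · refine le_one_add_mul_of_le_third_mul_add hs0 hs1
      (socialCost_nonneg (fun h => (ha2 h).le) ha1 fun n h => hXpos n _ (hx.1 n) h) ?_
    exact hx.socialCost_le (fun h => (ha2 h).le) ha1 hXconv hXpos
      (fun h => le_sup' α (mem_univ h)) (hbound x hx.1) hy
  · have hlim : Tendsto (fun ρ : ℝ => 3 / 4 * (1 / (1 + ρ))) atTop (𝓝 0) := by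
      simpa using (tendsto_inv_atTop_zero.comp
        (tendsto_atTop_add_const_left _ 1 tendsto_id)).const_mul (3 / 4 : ℝ)
    obtain ⟨R, hR⟩ := eventually_atTop.mp (hlim.eventually (ge_mem_nhds hε))
    exact ⟨R, fun ρ hρ => by linarith [hR ρ hρ]⟩

/-- Price-of-anarchy bound for the hourly proportional billing game with
quadratic costs: PoA ≤ 1 + (3/4)·sup_h 1/(1 + a₁ʰ/(a₂ʰ L̄ʰ)); in particular
PoA ≤ 7/4, and the bound tends to 1 as the ratio a₁ʰ/(a₂ʰ L̄ʰ) → ∞. -/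
theorem hp_quadratic_poa_bound
    {N H : Type*} [Fintype N] [Fintype H] [DecidableEq N] [Nonempty H]
    (a1 a2 Lbar : H → ℝ) (ha2 : ∀ h, 0 < a2 h) (ha1 : ∀ h, 0 ≤ a1 h)
    (hLbar : ∀ h, 0 < Lbar h)
    (X : N → Set (H → ℝ))
    (hXne : ∀ n, (X n).Nonempty)
    (hXcomp : ∀ n, IsCompact (X n))
    (hXconv : ∀ n, Convex ℝ (X n))
    (hXpos : ∀ n, ∀ z ∈ X n, ∀ h, 0 ≤ z h)
    (hbound : ∀ x : N → H → ℝ, (∀ n, x n ∈ X n) → ∀ h, (∑ n, x n h) ≤ Lbar h)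
    (b : N → (N → H → ℝ) → ℝ)
    (hb : ∀ n x, b n x = ∑ h, x n h * (a2 h * (∑ m, x m h) + a1 h))
    (SC : (N → H → ℝ) → ℝ)
    (hSC : ∀ x, SC x = ∑ h, (a2 h * (∑ n, x n h) ^ 2 + a1 h * (∑ n, x n h)))
    (NE : (N → H → ℝ) → Prop)
    (hNE : ∀ x, NE x ↔ (∀ n, x n ∈ X n) ∧
      ∀ n, ∀ y ∈ X n, b n x ≤ b n (Function.update x n y))
    (K : ℝ)
    (hK : K = 1 + 3 / 4 * Finset.univ.sup' Finset.univ_nonempty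
      (fun h => 1 / (1 + a1 h / (a2 h * Lbar h)))) :
    (∀ x, NE x → ∀ y : N → H → ℝ, (∀ n, y n ∈ X n) → SC x ≤ K * SC y) ∧
    K ≤ 7 / 4 ∧
    (∀ ε > (0 : ℝ), ∃ R : ℝ, ∀ ρ : ℝ, R ≤ ρ → 1 + 3 / 4 * (1 / (1 + ρ)) ≤ 1 + ε) :=
  hp_quadratic_poa_bound_general a1 a2 Lbar ha2 ha1 hLbar X hXconv hXpos hbound b hb SC hSC NE hNE K
    hK
end

section
/- For the smoothness parameters of Theorem 2: for every r ≥ 0, μ(r) := (−1 + √(1 + (1+r)^2))/(1+r)^2 satisfies 0 < μ(r) < 1, and λ(r) := ((1 + r μ(r))^2 + μ(r)) / (4(1+r) μ(r)) satisfies λ(r)/(1 − μ(r)) ≤ 1 + (3/4)·(1/(1+r)). -/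
set_option maxHeartbeats 1000000 in
/-- For every r ≥ 0, the smoothness constants
μ(r) = (−1 + √(1+(1+r)²))/(1+r)² and λ(r) = ((1+rμ)² + μ)/(4(1+r)μ) satisfy
0 < μ < 1 and λ/(1−μ) ≤ 1 + (3/4)·(1/(1+r)). -/
theorem smoothness_constants_bound (r : ℝ) (hr : 0 ≤ r)
    (mu lam : ℝ)
    (hmu : mu = (-1 + Real.sqrt (1 + (1 + r) ^ 2)) / (1 + r) ^ 2)
    (hlam : lam = ((1 + r * mu) ^ 2 + mu) / (4 * (1 + r) * mu)) :
    0 < mu ∧ mu < 1 ∧ lam / (1 - mu) ≤ 1 + 3 / 4 * (1 / (1 + r)) := by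
  set s : ℝ := 1 + r with hsdef
  have hs : 1 ≤ s := by simp [hsdef]; linarith
  have hs0 : 0 < s := by linarith
  set t : ℝ := Real.sqrt (1 + s ^ 2) with htdef
  have ht2 : t ^ 2 = 1 + s ^ 2 := Real.sq_sqrt (by positivity)
  have ht0 : 0 ≤ t := Real.sqrt_nonneg _
  have ht1 : 1 < t := by nlinarith
  have hmu' : mu = (t - 1) / s ^ 2 := by rw [hmu]; ring_nf
  have hmupos : 0 < mu := by
    rw [hmu']; exact div_pos (by linarith) (by positivity)
  have hkey : s ^ 2 * mu ^ 2 + 2 * mu = 1 := by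
    rw [hmu']; field_simp; nlinarith
  have hmul1 : mu < 1 := by nlinarith [sq_nonneg mu, mul_pos hmupos hmupos]
  refine ⟨hmupos, hmul1, ?_⟩
  have h1mu : 0 < 1 - mu := by linarith
  have hq0 : (0:ℝ) < s ^ 3 + 3 * s ^ 2 + 2 * s + 4 := by positivity
  have hc0 : (0:ℝ) < s ^ 4 + s ^ 3 + 2 * s ^ 2 + (s ^ 3 + 3 * s ^ 2 + 2 * s + 4) := by
    positivity
  have hlb : s ^ 2 + s + 2 ≤ (s ^ 3 + 3 * s ^ 2 + 2 * s + 4) * mu := by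
    rw [hmu', ← mul_div_assoc, le_div_iff₀ (by positivity)]
    have h1 : ((s ^ 3 + 3 * s ^ 2 + 2 * s + 4) * t) ^ 2
        = (s ^ 3 + 3 * s ^ 2 + 2 * s + 4) ^ 2 * (1 + s ^ 2) := by
      rw [mul_pow, ht2]
    have h2 : ((s ^ 3 + 3 * s ^ 2 + 2 * s + 4) * t) ^ 2
        - (s ^ 4 + s ^ 3 + 2 * s ^ 2 + (s ^ 3 + 3 * s ^ 2 + 2 * s + 4)) ^ 2
        = 2 * s ^ 7 + 2 * s ^ 5 := by rw [h1]; ring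
    have hqt : s ^ 4 + s ^ 3 + 2 * s ^ 2 + (s ^ 3 + 3 * s ^ 2 + 2 * s + 4)
        ≤ (s ^ 3 + 3 * s ^ 2 + 2 * s + 4) * t := by
      have hsq : (s ^ 4 + s ^ 3 + 2 * s ^ 2 + (s ^ 3 + 3 * s ^ 2 + 2 * s + 4)) ^ 2
          ≤ ((s ^ 3 + 3 * s ^ 2 + 2 * s + 4) * t) ^ 2 := by
        have h5 : (0:ℝ) < s ^ 5 := pow_pos hs0 5
        have h7 : (0:ℝ) < s ^ 7 := pow_pos hs0 7
        linarith [h2]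
      have hmono := Real.sqrt_le_sqrt hsq
      rwa [Real.sqrt_sq hc0.le, Real.sqrt_sq (mul_nonneg hq0.le ht0)] at hmono
    nlinarith [hqt]
  have hk0 : s ^ 2 * mu ^ 2 + 2 * mu - 1 = 0 := by linarith
  have hE' : s ^ 2 * (1 - (s + 3) * mu + (s + 2) * mu ^ 2) ≤ 0 := by
    have hid : s ^ 2 * (1 - (s + 3) * mu + (s + 2) * mu ^ 2)
        = (s ^ 2 + s + 2 - (s ^ 3 + 3 * s ^ 2 + 2 * s + 4) * mu)
          + (s + 2) * (s ^ 2 * mu ^ 2 + 2 * mu - 1) := by ring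
    rw [hid, hk0, mul_zero, add_zero]
    linarith
  have hE : 1 - (s + 3) * mu + (s + 2) * mu ^ 2 ≤ 0 := by
    nlinarith [hE', mul_pos hs0 hs0]
  have hr' : r = s - 1 := by rw [hsdef]; ring
  have hb : 1 + 3 / 4 * (1 / s) = (4 * s + 3) / (4 * s) := by field_simp
  rw [hlam, hr', hb, div_le_div_iff₀ h1mu (by positivity : (0:ℝ) < 4 * s),
    div_mul_eq_mul_div, div_le_iff₀ (by positivity : (0:ℝ) < 4 * s * mu)]
  have hEs : s * (1 - (s + 3) * mu + (s + 2) * mu ^ 2) ≤ 0 :=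
    mul_nonpos_of_nonneg_of_nonpos hs0.le hE
  have hks : s * (s ^ 2 * mu ^ 2 + 2 * mu - 1) = 0 := by rw [hk0, mul_zero]
  nlinarith [hEs, hks]
end
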